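/- Let q be a prime and suppose q divides c. Then a(0; c, D) = Σ_{x mod c|D|} χ_D(x) S(x, 1; c) = 0, where χ_D is a real primitive Dirichlet character of conductor |D| with gcd(q, D) = 1 and S(x,1;c) is the Kloosterman sum modulo c. -/

import Mathlib

open Complex

/-- `e(a/n) = exp(2πi·a/n)` for `a : ZMod n`. -/
noncomputable def eZ (n : ℕ) (a : ZMod n) : ℂ :=
  Complex.exp (2 * Real.pi * Complex.I * (a.val : ℂ) / (n : ℂ))

/-- The classical Kloosterman sum `S(a,1;c) = Σ*_{y mod c} e((ay + ȳ)/c)`. -/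
noncomputable def kloos (c : ℕ) [NeZero c] (a : ZMod c) : ℂ :=
  ∑ y : (ZMod c)ˣ, eZ c (a * (y : ZMod c) + ((y⁻¹ : (ZMod c)ˣ) : ZMod c))

lemma eZ_natCast (c : ℕ) [NeZero c] (m : ℕ) :
    eZ c (m : ZMod c) = Complex.exp (2 * Real.pi * Complex.I * (m : ℂ) / (c : ℂ)) := by
  have h : (m : ZMod c).val = m % c := ZMod.val_natCast c m
  rw [eZ, h]
  have := Nat.div_add_mod m c
  have hc : (c : ℂ) ≠ 0 := Nat.cast_ne_zero.mpr (NeZero.ne c)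
  have : (m : ℂ) = c * (m / c : ℕ) + (m % c : ℕ) := by
    exact_mod_cast congrArg (Nat.cast : ℕ → ℂ) this.symm
  rw [this]
  rw [show 2 * Real.pi * Complex.I * ((c : ℂ) * (m / c : ℕ) + (m % c : ℕ)) / (c : ℂ)
      = 2 * Real.pi * Complex.I * ((m % c : ℕ)) / c + (m / c : ℕ) * (2 * Real.pi * Complex.I) by
    field_simp; ring]
  rw [Complex.exp_add]
  have : Complex.exp ((m / c : ℕ) * (2 * Real.pi * Complex.I)) = 1 := by
    simpa using Complex.exp_int_mul_two_pi_mul_I (m / c : ℕ)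
  rw [this, mul_one]

lemma eZ_add (c : ℕ) [NeZero c] (a b : ZMod c) : eZ c (a + b) = eZ c a * eZ c b := by
  have ha : ((a.val : ℕ) : ZMod c) = a := by simp [ZMod.natCast_val, ZMod.cast_id]
  have hb : ((b.val : ℕ) : ZMod c) = b := by simp [ZMod.natCast_val, ZMod.cast_id]
  rw [← ha, ← hb, ← Nat.cast_add, eZ_natCast, eZ_natCast, eZ_natCast, ← Complex.exp_add]
  congr 1
  push_cast
  ring

lemma eZ_eq_one_iff (c : ℕ) [NeZero c] (a : ZMod c) : eZ c a = 1 ↔ a = 0 := by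
  constructor
  · intro h
    rw [eZ, Complex.exp_eq_one_iff] at h
    obtain ⟨n, hn⟩ := h
    have hc : (c : ℂ) ≠ 0 := Nat.cast_ne_zero.mpr (NeZero.ne c)
    have h2 : (2 : ℂ) * Real.pi * Complex.I ≠ 0 := by
      simp [Real.pi_ne_zero, Complex.I_ne_zero]
    have hv : (a.val : ℂ) = n * c := by
      have h' : (2 * (Real.pi : ℂ) * Complex.I) * ((a.val : ℂ) / c)
          = (2 * (Real.pi : ℂ) * Complex.I) * (n : ℂ) := by
        linear_combination hn
      have h3 := mul_left_cancel₀ h2 h'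
      rw [div_eq_iff hc] at h3
      exact h3
    have hz : (a.val : ℤ) = n * c := by exact_mod_cast hv
    have hlt : (a.val : ℤ) < c := by exact_mod_cast a.val_lt
    have hnn : (0 : ℤ) ≤ (a.val : ℤ) := Int.ofNat_nonneg _
    have hcp : (0 : ℤ) < c := by exact_mod_cast Nat.pos_of_ne_zero (NeZero.ne c)
    have hn0 : n = 0 := by nlinarith
    have : a.val = 0 := by
      rw [hn0, zero_mul] at hz; exact_mod_cast hz
    exact (ZMod.val_eq_zero a).mp this
  · intro h; rw [h, eZ]; simp [ZMod.val_zero]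

lemma inner_vanish (q c N : ℕ) [NeZero c] [NeZero N] (hq : q.Prime) (hqc : q ∣ c)
    (hqN : ¬ q ∣ N) (χ : DirichletCharacter ℂ N) (y : (ZMod c)ˣ) :
    ∑ x : ZMod (c * N), χ (x.val) * eZ c ((x.val : ZMod c) * (y : ZMod c)) = 0 := by
  haveI : NeZero (c * N) := ⟨Nat.mul_ne_zero (NeZero.ne c) (NeZero.ne N)⟩
  have hcm : c / q * q = c := Nat.div_mul_cancel hqc
  set m := c / q with hmdef
  have hm0 : m ≠ 0 := by
    intro h; rw [h, zero_mul] at hcm; exact NeZero.ne c hcm.symm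
  set t : ZMod (c * N) := ((m * N : ℕ) : ZMod (c * N)) with ht
  set r : ZMod c := ((m * N : ℕ) : ZMod c) with hr
  set u : ℂ := eZ c (r * (y : ZMod c)) with hu
  set f : ZMod (c * N) → ℂ :=
    fun x => χ (x.val) * eZ c ((x.val : ZMod c) * (y : ZMod c)) with hf
  have key : ∀ x, f (x + t) = u * f x := by
    intro x
    have h1 : (((x + t).val : ℕ) : ZMod N) = ((x.val : ℕ) : ZMod N) := by
      rw [ZMod.natCast_val, ZMod.natCast_val,
        ← ZMod.castHom_apply (h := dvd_mul_left N c),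
        ← ZMod.castHom_apply (h := dvd_mul_left N c), map_add]
      have h0 : (ZMod.castHom (dvd_mul_left N c) (ZMod N)) t = 0 := by
        rw [ht, map_natCast, ZMod.natCast_eq_zero_iff]
        exact dvd_mul_left N m
      rw [h0, add_zero]
    have h2 : (((x + t).val : ℕ) : ZMod c) = ((x.val : ℕ) : ZMod c) + r := by
      rw [ZMod.natCast_val, ZMod.natCast_val,
        ← ZMod.castHom_apply (h := dvd_mul_right c N),
        ← ZMod.castHom_apply (h := dvd_mul_right c N), map_add]
      congr 1
      rw [ht, hr, map_natCast]
    simp only [hf]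
    rw [h1, h2, add_mul, eZ_add]
    ring
  have hsum : ∑ x, f x = u * ∑ x, f x := by
    have he := Equiv.sum_comp (Equiv.addRight t) f
    simp only [Equiv.coe_addRight] at he
    calc ∑ x, f x = ∑ x, f (x + t) := he.symm
      _ = ∑ x, u * f x := by
          apply Finset.sum_congr rfl; intro x _; exact key x
      _ = u * ∑ x, f x := by rw [Finset.mul_sum]
  have hu1 : u ≠ 1 := by
    intro h
    rw [hu, eZ_eq_one_iff] at h
    have hr0 : r = 0 := (Units.mul_left_eq_zero y).mp h
    rw [hr, ZMod.natCast_eq_zero_iff] at hr0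
    rw [← hcm] at hr0
    have : q ∣ N := by
      have h' : m * q ∣ m * N := by
        rw [mul_comm m q] at hr0 ⊢
        exact hr0
      exact (Nat.mul_dvd_mul_iff_left (Nat.pos_of_ne_zero hm0)).mp h'
    exact hqN this
  have h0 : (u - 1) * (∑ x, f x) = 0 := by
    rw [sub_mul, one_mul, ← hsum, sub_self]
  rcases mul_eq_zero.mp h0 with h | h
  · exact absurd (sub_eq_zero.mp h) hu1
  · exact h


/-- If `q` is a prime dividing `c`, `χ_D` a real primitive Dirichlet character of
conductor `|D|` with `gcd(q, D) = 1`, then `a(0; c, D) = Σ_{x mod c|D|} χ_D(x) S(x,1;c) = 0`. -/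
theorem aSum_zero_vanishes (q c : ℕ) (D : ℤ) (hq : q.Prime) (hqc : q ∣ c)
    [NeZero c] [NeZero (c * D.natAbs)]
    (χ : DirichletCharacter ℂ D.natAbs) (hprim : χ.IsPrimitive)
    (hreal : ∀ x, (χ x).im = 0) (hcop : IsCoprime (q : ℤ) D) :
    (∑ x : ZMod (c * D.natAbs), χ (x.val) * kloos c (x.val)) = 0 := by
  haveI : NeZero D.natAbs := ⟨by
    intro h
    exact NeZero.ne (c * D.natAbs) (by rw [h, mul_zero])⟩
  have hqN : ¬ q ∣ D.natAbs := by
    intro h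
    have hd : (q : ℤ) ∣ D :=
      dvd_trans (Int.ofNat_dvd.mpr h) (Int.natAbs_dvd.mpr dvd_rfl)
    have hun : IsUnit (q : ℤ) := hcop.isUnit_of_dvd' dvd_rfl hd
    rcases Int.isUnit_iff.mp hun with h1 | h1
    · exact hq.ne_one (by exact_mod_cast h1)
    · have : (0 : ℤ) ≤ (q : ℤ) := Int.ofNat_nonneg q
      omega
  have step : ∀ x : ZMod (c * D.natAbs), χ (x.val) * kloos c (x.val) =
      ∑ y : (ZMod c)ˣ,
        (χ (x.val) * eZ c ((x.val : ZMod c) * (y : ZMod c))) *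
          eZ c (((y⁻¹ : (ZMod c)ˣ) : ZMod c)) := by
    intro x
    rw [kloos, Finset.mul_sum]
    apply Finset.sum_congr rfl; intro y _
    rw [eZ_add]; ring
  rw [Finset.sum_congr rfl (fun x _ => step x), Finset.sum_comm]
  apply Finset.sum_eq_zero; intro y _
  rw [← Finset.sum_mul, inner_vanish q c D.natAbs hq hqc hqN χ y, zero_mul]
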